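/- For an odd prime p and ξ = (ξ₁,ξ₂,ξ₃,ξ₄) ∈ (ℚₚ/ℤₚ)⁴, the map πξ defined on ℂ-valued square-integrable functions on ℤₚ by (πξ(x)φ)(u) := e^{2πi{ξ₁x₁+ξ₂x₂+ξ₃(x₃+ux₂)+ξ₄(x₄+ux₃+(u²/2)x₂)}ₚ} φ(u+x₁) satisfies πξ(x ⋆ y) = πξ(x)πξ(y) for all x, y ∈ ℬ₄(ℤₚ), i.e. it is a group homomorphism into the unitary operators on L²(ℤₚ). -/

import Mathlib

/-- The Engel group multiplication on `ℤₚ⁴`, where `h` plays the role of `½`. -/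
noncomputable def engelMul {p : ℕ} [Fact p.Prime] (h : ℤ_[p])
    (x y : ℤ_[p] × ℤ_[p] × ℤ_[p] × ℤ_[p]) :
    ℤ_[p] × ℤ_[p] × ℤ_[p] × ℤ_[p] :=
  (x.1 + y.1, x.2.1 + y.2.1, x.2.2.1 + y.2.2.1 + x.1 * y.2.1,
    x.2.2.2 + y.2.2.2 + x.1 * y.2.2.1 + h * x.1 ^ 2 * y.2.1)

/-- The action `(πξ(x)φ)(u) :=
`e^{2πi{ξ₁x₁+ξ₂x₂+ξ₃(x₃+ux₂)+ξ₄(x₄+ux₃+(u²/2)x₂)}ₚ} φ(u+x₁)`,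
with the standard character abstracted as `e : ℚₚ → ℂ`. -/
noncomputable def engelAct {p : ℕ} [Fact p.Prime] (e : ℚ_[p] → ℂ)
    (ξ₁ ξ₂ ξ₃ ξ₄ : ℚ_[p]) (x : ℤ_[p] × ℤ_[p] × ℤ_[p] × ℤ_[p])
    (φ : ℤ_[p] → ℂ) (u : ℤ_[p]) : ℂ :=
  e (ξ₁ * (x.1 : ℚ_[p]) + ξ₂ * (x.2.1 : ℚ_[p]) +
      ξ₃ * ((x.2.2.1 : ℚ_[p]) + (u : ℚ_[p]) * (x.2.1 : ℚ_[p])) +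
      ξ₄ * ((x.2.2.2 : ℚ_[p]) + (u : ℚ_[p]) * (x.2.2.1 : ℚ_[p]) +
        (u : ℚ_[p]) ^ 2 / 2 * (x.2.1 : ℚ_[p]))) *
    φ (u + x.1)

/- `πξ(x)` is multiplication by `e` of a phase followed by translation by `x₁`, so the
homomorphism property reduces to the phase being a cocycle over these translations: a polynomial
identity in which `h = 1/2` matches the expansion of `(u + x₁)² / 2`. -/

section EngelPhase

variable {p : ℕ} [Fact p.Prime]

noncomputable def engelPhase (ξ₁ ξ₂ ξ₃ ξ₄ : ℚ_[p]) (x : ℤ_[p] × ℤ_[p] × ℤ_[p] × ℤ_[p])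
    (u : ℤ_[p]) : ℚ_[p] :=
  ξ₁ * (x.1 : ℚ_[p]) + ξ₂ * (x.2.1 : ℚ_[p]) +
    ξ₃ * ((x.2.2.1 : ℚ_[p]) + (u : ℚ_[p]) * (x.2.1 : ℚ_[p])) +
    ξ₄ * ((x.2.2.2 : ℚ_[p]) + (u : ℚ_[p]) * (x.2.2.1 : ℚ_[p]) +
      (u : ℚ_[p]) ^ 2 / 2 * (x.2.1 : ℚ_[p]))

theorem engelAct_apply (e : ℚ_[p] → ℂ) (ξ₁ ξ₂ ξ₃ ξ₄ : ℚ_[p])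
    (x : ℤ_[p] × ℤ_[p] × ℤ_[p] × ℤ_[p]) (φ : ℤ_[p] → ℂ) (u : ℤ_[p]) :
    engelAct e ξ₁ ξ₂ ξ₃ ξ₄ x φ u = e (engelPhase ξ₁ ξ₂ ξ₃ ξ₄ x u) * φ (u + x.1) :=
  rfl

theorem PadicInt.coe_eq_inv_two_of_two_mul_eq_one {h : ℤ_[p]} (h2 : 2 * h = 1) :
    (h : ℚ_[p]) = 2⁻¹ :=
  eq_inv_of_mul_eq_one_right (by exact_mod_cast congrArg ((↑) : ℤ_[p] → ℚ_[p]) h2)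

theorem engelPhase_engelMul {h : ℤ_[p]} (h2 : 2 * h = 1) (ξ₁ ξ₂ ξ₃ ξ₄ : ℚ_[p])
    (x y : ℤ_[p] × ℤ_[p] × ℤ_[p] × ℤ_[p]) (u : ℤ_[p]) :
    engelPhase ξ₁ ξ₂ ξ₃ ξ₄ (engelMul h x y) u =
      engelPhase ξ₁ ξ₂ ξ₃ ξ₄ x u + engelPhase ξ₁ ξ₂ ξ₃ ξ₄ y (u + x.1) := by
  simp only [engelPhase, engelMul]
  push_cast
  rw [PadicInt.coe_eq_inv_two_of_two_mul_eq_one h2]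
  ring

end EngelPhase

theorem engelAct_mul_general (p : ℕ) [Fact p.Prime]
    (h : ℤ_[p]) (h2 : 2 * h = 1)
    (e : ℚ_[p] → ℂ)
    (he_add : ∀ x y, e (x + y) = e x * e y)
    (ξ₁ ξ₂ ξ₃ ξ₄ : ℚ_[p])
    (x y : ℤ_[p] × ℤ_[p] × ℤ_[p] × ℤ_[p]) (φ : ℤ_[p] → ℂ) :
    engelAct e ξ₁ ξ₂ ξ₃ ξ₄ (engelMul h x y) φ =
      engelAct e ξ₁ ξ₂ ξ₃ ξ₄ x (engelAct e ξ₁ ξ₂ ξ₃ ξ₄ y φ) := by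
  funext u
  rw [engelAct_apply, engelAct_apply, engelAct_apply, engelPhase_engelMul h2, he_add, mul_assoc]
  simp only [engelMul, add_assoc]

/-- for every `ξ ∈ (ℚₚ/ℤₚ)⁴` (given by representatives
`ξ₁, ξ₂, ξ₃, ξ₄ ∈ ℚₚ`), the map `πξ` satisfies `πξ(x ⋆ y) = πξ(x) πξ(y)`, i.e.
it is a group homomorphism of `ℬ₄(ℤₚ)` into the (unitary) operators on
functions on `ℤₚ`. -/
theorem engelAct_mul (p : ℕ) [Fact p.Prime] (hp : Odd p)
    (h : ℤ_[p]) (h2 : 2 * h = 1)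
    (e : ℚ_[p] → ℂ)
    (he_add : ∀ x y, e (x + y) = e x * e y)
    (he_abs : ∀ x, ‖e x‖ = 1)
    (he_ker : ∀ x, e x = 1 ↔ ‖x‖ ≤ 1)
    (ξ₁ ξ₂ ξ₃ ξ₄ : ℚ_[p])
    (x y : ℤ_[p] × ℤ_[p] × ℤ_[p] × ℤ_[p]) (φ : ℤ_[p] → ℂ) :
    engelAct e ξ₁ ξ₂ ξ₃ ξ₄ (engelMul h x y) φ =
      engelAct e ξ₁ ξ₂ ξ₃ ξ₄ x (engelAct e ξ₁ ξ₂ ξ₃ ξ₄ y φ) :=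
  engelAct_mul_general p h h2 e he_add ξ₁ ξ₂ ξ₃ ξ₄ x y φ
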